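/- arXiv:2408.03123 — 4 statements merged into one kernel-verified Lean document; each statement's English description precedes it below -/
import Mathlib

section
/- Let H_{x1}, H_{z1} be matrices over GF(2) of sizes m1×nA and m2×nA with H_{x1}·H_{z1}ᵀ = 0, and H_{x2}, H_{z2} be matrices over GF(2) of sizes m3×nB and m4×nB with H_{x2}·H_{z2}ᵀ = 0. Define the block matrices H_x and H_z as in the 4D XYZ product construction (Eqs. Hx, Hz of the paper). Then H_x·H_zᵀ + H_z·H_xᵀ = 0 over GF(2), i.e., the symplectic commutation condition holds. -/
/-!
Write `M = H_x H_zᵀ`. Then `H_z H_xᵀ = Mᵀ`, and over `F_2` the claim `M + Mᵀ = 0` says that `M`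
is symmetric. Each block of `M` is a single product `(A ⊗ B)(C ⊗ D)ᵀ = ACᵀ ⊗ BDᵀ` (or zero), and
the two off-diagonal blocks `(r, r')` and `(r', r)` come out as transposes of each other, while the
diagonal blocks are Gram matrices `I ⊗ XᵀX` or `XᵀX ⊗ I`.
-/

open Matrix Kronecker

abbrev F2 := ZMod 2

section

variable {A1 B1 A2 B2 Q1 Q2 : Type*}
  [Fintype A1] [Fintype B1] [Fintype A2] [Fintype B2] [Fintype Q1] [Fintype Q2]
  [DecidableEq A1] [DecidableEq B1] [DecidableEq A2] [DecidableEq B2]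
  [DecidableEq Q1] [DecidableEq Q2]

/-- The X-part (entries carrying Pauli `X` or `Y`) of the stabilizer matrix of the
4D XYZ product of two CSS codes with parity-check matrices
`Hx1 : A1 × Q1`, `Hz1 : B1 × Q1`, `Hx2 : A2 × Q2`, `Hz2 : B2 × Q2`
(`Q1`, `Q2` index the qubits of the two input codes; `A1,B1,A2,B2` their checks).
Rows are the four stabilizer blocks `S, T, U, V`; columns are the five
qubit blocks `A, B, C, D, E` of the 4D XYZ product (Eq. (13) of the paper,
with block shapes as dictated by the tensor-product structure). -/
def XYZ4D_Hx (Hx1 : Matrix A1 Q1 F2) (Hz1 : Matrix B1 Q1 F2)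
    (Hx2 : Matrix A2 Q2 F2) (Hz2 : Matrix B2 Q2 F2) :
    Matrix ((A1 × Q2) ⊕ (Q1 × B2) ⊕ (Q1 × A2) ⊕ (B1 × Q2))
           ((A1 × B2) ⊕ (A1 × A2) ⊕ (Q1 × Q2) ⊕ (B1 × B2) ⊕ (B1 × A2)) F2 :=
  fun r c => match r, c with
  | .inl s, .inl a => ((1 : Matrix A1 A1 F2) ⊗ₖ Hz2ᵀ) s a
  | .inl s, .inr (.inl b) => ((1 : Matrix A1 A1 F2) ⊗ₖ Hx2ᵀ) s b
  | .inr (.inl t), .inl a => (Hx1ᵀ ⊗ₖ (1 : Matrix B2 B2 F2)) t a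
  | .inr (.inl t), .inr (.inr (.inl q)) => ((1 : Matrix Q1 Q1 F2) ⊗ₖ Hz2) t q
  | .inr (.inr (.inl u)), .inr (.inr (.inl q)) => ((1 : Matrix Q1 Q1 F2) ⊗ₖ Hx2) u q
  | .inr (.inr (.inl u)), .inr (.inr (.inr (.inr e))) => (Hz1ᵀ ⊗ₖ (1 : Matrix A2 A2 F2)) u e
  | .inr (.inr (.inr v)), .inr (.inr (.inr (.inl d))) => ((1 : Matrix B1 B1 F2) ⊗ₖ Hz2ᵀ) v d
  | .inr (.inr (.inr v)), .inr (.inr (.inr (.inr e))) => ((1 : Matrix B1 B1 F2) ⊗ₖ Hx2ᵀ) v e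
  | _, _ => 0

/-- The Z-part (entries carrying Pauli `Z` or `Y`) of the stabilizer matrix of the
4D XYZ product (Eq. (14) of the paper). -/
def XYZ4D_Hz (Hx1 : Matrix A1 Q1 F2) (Hz1 : Matrix B1 Q1 F2)
    (Hx2 : Matrix A2 Q2 F2) (Hz2 : Matrix B2 Q2 F2) :
    Matrix ((A1 × Q2) ⊕ (Q1 × B2) ⊕ (Q1 × A2) ⊕ (B1 × Q2))
           ((A1 × B2) ⊕ (A1 × A2) ⊕ (Q1 × Q2) ⊕ (B1 × B2) ⊕ (B1 × A2)) F2 :=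
  fun r c => match r, c with
  | .inl s, .inr (.inl b) => ((1 : Matrix A1 A1 F2) ⊗ₖ Hx2ᵀ) s b
  | .inl s, .inr (.inr (.inl q)) => (Hx1 ⊗ₖ (1 : Matrix Q2 Q2 F2)) s q
  | .inr (.inl t), .inl a => (Hx1ᵀ ⊗ₖ (1 : Matrix B2 B2 F2)) t a
  | .inr (.inl t), .inr (.inr (.inr (.inl d))) => (Hz1ᵀ ⊗ₖ (1 : Matrix B2 B2 F2)) t d
  | .inr (.inr (.inl u)), .inr (.inl b) => (Hx1ᵀ ⊗ₖ (1 : Matrix A2 A2 F2)) u b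
  | .inr (.inr (.inl u)), .inr (.inr (.inr (.inr e))) => (Hz1ᵀ ⊗ₖ (1 : Matrix A2 A2 F2)) u e
  | .inr (.inr (.inr v)), .inr (.inr (.inl q)) => (Hz1 ⊗ₖ (1 : Matrix Q2 Q2 F2)) v q
  | .inr (.inr (.inr v)), .inr (.inr (.inr (.inl d))) => ((1 : Matrix B1 B1 F2) ⊗ₖ Hz2ᵀ) v d
  | _, _ => 0

theorem Matrix.sum_kronecker_apply_mul_kronecker_apply {R l m n p q r : Type*} [CommSemiring R]
    [Fintype n] [Fintype r] (A : Matrix l n R) (B : Matrix m r R) (C : Matrix p n R)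
    (D : Matrix q r R) (i : l × m) (j : p × q) :
    ∑ k, (A ⊗ₖ B) i k * (C ⊗ₖ D) j k = ((A * Cᵀ) ⊗ₖ (B * Dᵀ)) i j := by
  rw [mul_kronecker_mul, kroneckerMap_transpose, mul_apply]
  rfl

theorem Matrix.kronecker_apply_swap {R l m n p : Type*} [Mul R] (A : Matrix l m R)
    (B : Matrix n p R) (i : m × p) (j : l × n) : (A ⊗ₖ B) j i = (Aᵀ ⊗ₖ Bᵀ) i j := by
  rw [kroneckerMap_transpose]
  rfl

theorem Matrix.IsSymm.add_transpose_eq_zero {R n : Type*} [Ring R] [CharP R 2]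
    {M : Matrix n n R} (hM : M.IsSymm) : M + Mᵀ = 0 := by
  rw [hM.eq]
  ext i j
  exact CharTwo.add_self_eq_zero _

def XYZ4D_crossGram (Hx1 : Matrix A1 Q1 F2) (Hz1 : Matrix B1 Q1 F2)
    (Hx2 : Matrix A2 Q2 F2) (Hz2 : Matrix B2 Q2 F2) :
    Matrix ((A1 × Q2) ⊕ (Q1 × B2) ⊕ (Q1 × A2) ⊕ (B1 × Q2))
           ((A1 × Q2) ⊕ (Q1 × B2) ⊕ (Q1 × A2) ⊕ (B1 × Q2)) F2 :=
  fun r r' => match r, r' with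
  | .inl s, .inl s' => ((1 : Matrix A1 A1 F2) ⊗ₖ (Hx2ᵀ * Hx2)) s s'
  | .inl s, .inr (.inl t) => (Hx1 ⊗ₖ Hz2ᵀ) s t
  | .inl s, .inr (.inr (.inl u)) => (Hx1 ⊗ₖ Hx2ᵀ) s u
  | .inr (.inl t), .inl s => (Hx1ᵀ ⊗ₖ Hz2) t s
  | .inr (.inl t), .inr (.inl t') => ((Hx1ᵀ * Hx1) ⊗ₖ (1 : Matrix B2 B2 F2)) t t'
  | .inr (.inl t), .inr (.inr (.inr v)) => (Hz1ᵀ ⊗ₖ Hz2) t v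
  | .inr (.inr (.inl u)), .inl s => (Hx1ᵀ ⊗ₖ Hx2) u s
  | .inr (.inr (.inl u)), .inr (.inr (.inl u')) => ((Hz1ᵀ * Hz1) ⊗ₖ (1 : Matrix A2 A2 F2)) u u'
  | .inr (.inr (.inl u)), .inr (.inr (.inr v)) => (Hz1ᵀ ⊗ₖ Hx2) u v
  | .inr (.inr (.inr v)), .inr (.inl t) => (Hz1 ⊗ₖ Hz2ᵀ) v t
  | .inr (.inr (.inr v)), .inr (.inr (.inl u)) => (Hz1 ⊗ₖ Hx2ᵀ) v u
  | .inr (.inr (.inr v)), .inr (.inr (.inr v')) => ((1 : Matrix B1 B1 F2) ⊗ₖ (Hz2ᵀ * Hz2)) v v'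
  | _, _ => 0

theorem XYZ4D_Hx_mul_transpose_Hz (Hx1 : Matrix A1 Q1 F2) (Hz1 : Matrix B1 Q1 F2)
    (Hx2 : Matrix A2 Q2 F2) (Hz2 : Matrix B2 Q2 F2) :
    XYZ4D_Hx Hx1 Hz1 Hx2 Hz2 * (XYZ4D_Hz Hx1 Hz1 Hx2 Hz2)ᵀ =
      XYZ4D_crossGram Hx1 Hz1 Hx2 Hz2 := by
  ext (s | t | u | v) (s' | t' | u' | v') <;>
  simp only [XYZ4D_Hx, XYZ4D_Hz, XYZ4D_crossGram, mul_apply, transpose_apply,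
    Fintype.sum_sum_type, mul_zero, zero_mul, Finset.sum_const_zero, add_zero, zero_add,
    sum_kronecker_apply_mul_kronecker_apply, transpose_transpose, transpose_one,
    Matrix.one_mul, Matrix.mul_one]

omit [Fintype Q1] [Fintype Q2] [DecidableEq Q1] [DecidableEq Q2] in
theorem XYZ4D_crossGram_isSymm (Hx1 : Matrix A1 Q1 F2) (Hz1 : Matrix B1 Q1 F2)
    (Hx2 : Matrix A2 Q2 F2) (Hz2 : Matrix B2 Q2 F2) :
    (XYZ4D_crossGram Hx1 Hz1 Hx2 Hz2).IsSymm := by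
  refine IsSymm.ext fun r r' => ?_
  rcases r with s | t | u | v <;> rcases r' with s' | t' | u' | v' <;>
  simp only [XYZ4D_crossGram] <;>
  first
  | rfl
  | rw [kronecker_apply_swap]
    simp only [transpose_mul, transpose_transpose, transpose_one]

theorem XYZ4D_symplectic_commutation_general
    (Hx1 : Matrix A1 Q1 F2) (Hz1 : Matrix B1 Q1 F2)
    (Hx2 : Matrix A2 Q2 F2) (Hz2 : Matrix B2 Q2 F2) :
    XYZ4D_Hx Hx1 Hz1 Hx2 Hz2 * (XYZ4D_Hz Hx1 Hz1 Hx2 Hz2)ᵀ +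
    XYZ4D_Hz Hx1 Hz1 Hx2 Hz2 * (XYZ4D_Hx Hx1 Hz1 Hx2 Hz2)ᵀ = 0 := by
  have hsymm : (XYZ4D_Hx Hx1 Hz1 Hx2 Hz2 * (XYZ4D_Hz Hx1 Hz1 Hx2 Hz2)ᵀ).IsSymm := by
    rw [XYZ4D_Hx_mul_transpose_Hz]
    exact XYZ4D_crossGram_isSymm Hx1 Hz1 Hx2 Hz2
  simpa only [transpose_mul, transpose_transpose] using hsymm.add_transpose_eq_zero

/-- The symplectic commutation condition for the 4D XYZ product:
if the two input pairs satisfy the CSS conditions `Hx1 · Hz1ᵀ = 0` and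
`Hx2 · Hz2ᵀ = 0`, then `H_x·H_zᵀ + H_z·H_xᵀ = 0` over `F_2`, i.e. the
stabilizer group of the 4D XYZ product code is Abelian. -/
theorem XYZ4D_symplectic_commutation
    (Hx1 : Matrix A1 Q1 F2) (Hz1 : Matrix B1 Q1 F2)
    (Hx2 : Matrix A2 Q2 F2) (Hz2 : Matrix B2 Q2 F2)
    (hcss1 : Hx1 * Hz1ᵀ = 0) (hcss2 : Hx2 * Hz2ᵀ = 0) :
    XYZ4D_Hx Hx1 Hz1 Hx2 Hz2 * (XYZ4D_Hz Hx1 Hz1 Hx2 Hz2)ᵀ +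
    XYZ4D_Hz Hx1 Hz1 Hx2 Hz2 * (XYZ4D_Hx Hx1 Hz1 Hx2 Hz2)ᵀ = 0 :=
  XYZ4D_symplectic_commutation_general Hx1 Hz1 Hx2 Hz2

end
end

section
/- Let H_{x1}, H_{z1} be m1×nA and m2×nA matrices and H_{x2}, H_{z2} be m3×nB and m4×nB matrices over GF(2). The solution space of the system: (I_{m1}⊗H_{x2})s = 0, (I_{m1}⊗H_{z2})s = 0, (I_{m2}⊗H_{x2})v = 0, (I_{m2}⊗H_{z2})v = 0, and (H_{z1}ᵀ⊗I_{nB})s + (H_{x1}ᵀ⊗I_{nB})v = 0, for (s,v) ∈ F_2^{m1·nB} × F_2^{m2·nB}, equals the tensor product ker([H_{z1}ᵀ, H_{x1}ᵀ]) ⊗ ker(vertcat(H_{x2}, H_{z2})) under the natural identification. In particular its dimension is dim ker([H_{z1}ᵀ, H_{x1}ᵀ]) · dim ker(vertcat(H_{x2}, H_{z2})). -/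
open Matrix Kronecker

def hcat {I J1 J2 : Type*} (A : Matrix I J1 F2) (B : Matrix I J2 F2) :
    Matrix I (J1 ⊕ J2) F2 := fun i => Sum.elim (A i) (B i)

def vcat {I1 I2 J : Type*} (A : Matrix I1 J F2) (B : Matrix I2 J F2) :
    Matrix (I1 ⊕ I2) J F2 := Sum.elim A B

/-!
Identify a pair `(s, v)` with one array `M : (m1 ⊕ m2) → nB → F2`, `M (inl i) b = s (i, b)`,
`M (inr j) b = v (j, b)`. The Kronecker equations say exactly that every row of `M` lies in
`W := ker (vcat Hx2 Hz2)` and every column in `U := ker (hcat Hx1ᵀ Hz1ᵀ)`, i.e. that `M` lies in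
`U ⊗ W`. To count this space, take an injection `L : 𝕜^r → 𝕜^K` onto `U` (`r = dim U`) and a
left inverse `π` of it. Applying `π` to every column turns such an array into an `r × B` array
with rows in `W`, and applying `L` to every column turns it back; both operations keep rows in
`W`, since each new row is a linear combination of old rows.
-/

open Module

section ArrayTensor

variable {R K K' B : Type*} [CommSemiring R]

/-- `U ⊗ W`, realised as the `K × B` arrays whose columns lie in `U` and whose rows lie in `W`. -/
def arrayTensor (U : Submodule R (K → R)) (W : Submodule R (B → R)) :
    Submodule R (K → B → R) :=
  (⨅ b, U.comap ((LinearMap.proj b).compLeft K)) ⊓ ⨅ k, W.comap (LinearMap.proj k)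

theorem mem_arrayTensor {U : Submodule R (K → R)} {W : Submodule R (B → R)} {M : K → B → R} :
    M ∈ arrayTensor U W ↔ (∀ b, (fun k => M k b) ∈ U) ∧ ∀ k, M k ∈ W := by
  simp only [arrayTensor, Submodule.mem_inf, Submodule.mem_iInf, Submodule.mem_comap]
  rfl

def colMap (A : (K → R) →ₗ[R] K' → R) : (K → B → R) →ₗ[R] K' → B → R :=
  LinearMap.pi fun k' => LinearMap.pi fun b =>
    LinearMap.proj k' ∘ₗ A ∘ₗ (LinearMap.proj b).compLeft K

theorem colMap_apply (A : (K → R) →ₗ[R] K' → R) (M : K → B → R) (k' : K') (b : B) :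
    colMap A M k' b = A (fun k => M k b) k' :=
  rfl

theorem colMap_comp {K'' : Type*} (A : (K' → R) →ₗ[R] K'' → R) (A' : (K → R) →ₗ[R] K' → R) :
    colMap (B := B) (A ∘ₗ A') = colMap A ∘ₗ colMap A' :=
  rfl

theorem colMap_id : colMap (B := B) (LinearMap.id : (K → R) →ₗ[R] K → R) = LinearMap.id :=
  rfl

theorem colMap_apply_mem [Fintype K] {W : Submodule R (B → R)} (A : (K → R) →ₗ[R] K' → R)
    {M : K → B → R} (hM : ∀ k, M k ∈ W) (k' : K') : colMap A M k' ∈ W := by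
  classical
  have hcomb : colMap A M k' = ∑ k, A (fun j => if k = j then 1 else 0) k' • M k := by
    ext b
    rw [colMap_apply, LinearMap.pi_apply_eq_sum_univ A]
    simp [mul_comm]
  rw [hcomb]
  exact W.sum_mem fun k _ => W.smul_mem _ (hM k)

theorem leftInverse_colMap {A : (K → R) →ₗ[R] K' → R} {A' : (K' → R) →ₗ[R] K → R}
    (h : A' ∘ₗ A = LinearMap.id) :
    Function.LeftInverse (colMap (B := B) A') (colMap A) := fun M => by
  rw [← LinearMap.comp_apply, ← colMap_comp, h, colMap_id, LinearMap.id_apply]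

theorem range_colMap_comp_compLeft_subtype {ι : Type*} [Fintype ι] [Fintype K]
    {U : Submodule R (K → R)} {W : Submodule R (B → R)} {L : (ι → R) →ₗ[R] K → R}
    {π : (K → R) →ₗ[R] ι → R} (hπ : π ∘ₗ L = LinearMap.id) (hL : LinearMap.range L = U) :
    LinearMap.range (colMap L ∘ₗ W.subtype.compLeft ι) = arrayTensor U W := by
  ext M
  constructor
  · rintro ⟨c, rfl⟩
    refine mem_arrayTensor.2 ⟨fun b => hL ▸ ⟨fun i => (c i : B → R) b, rfl⟩, ?_⟩
    exact colMap_apply_mem L fun i => (c i).2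
  · intro hM
    obtain ⟨hcol, hrow⟩ := mem_arrayTensor.1 hM
    refine ⟨fun i => ⟨colMap π M i, colMap_apply_mem π hrow i⟩, ?_⟩
    change colMap L (colMap π M) = M
    rw [← LinearMap.comp_apply (colMap L), ← colMap_comp]
    ext k b
    obtain ⟨x, hx⟩ := hL ▸ hcol b
    rw [colMap_apply, ← hx, LinearMap.comp_apply, ← LinearMap.comp_apply π, hπ,
      LinearMap.id_apply, hx]

end ArrayTensor

theorem finrank_arrayTensor {𝕜 K B : Type*} [Field 𝕜] [Fintype K] [Fintype B]
    (U : Submodule 𝕜 (K → 𝕜)) (W : Submodule 𝕜 (B → 𝕜)) :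
    finrank 𝕜 (arrayTensor U W) = finrank 𝕜 U * finrank 𝕜 W := by
  set r := finrank 𝕜 U
  let L : (Fin r → 𝕜) →ₗ[𝕜] K → 𝕜 :=
    U.subtype ∘ₗ (finBasis 𝕜 U).equivFun.symm.toLinearMap
  have hL : LinearMap.range L = U := by
    simp [L, LinearMap.range_comp]
  obtain ⟨π, hπ⟩ := L.exists_leftInverse_of_injective <| LinearMap.ker_eq_bot.2 <|
    U.injective_subtype.comp (finBasis 𝕜 U).equivFun.symm.injective
  have hinj : Function.Injective (colMap (B := B) L ∘ₗ W.subtype.compLeft (Fin r)) :=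
    (leftInverse_colMap hπ).injective.comp fun c c' h => funext fun i => Subtype.ext (congrFun h i)
  rw [← range_colMap_comp_compLeft_subtype hπ hL, LinearMap.finrank_range_of_inj hinj,
    finrank_pi_fintype]
  simp [r]

section Kronecker

variable {R I J B : Type*} [Semiring R] [Fintype I] [Fintype B]

theorem one_kronecker_mulVec_apply [DecidableEq I] (H : Matrix J B R) (s : I × B → R) (i : I)
    (a : J) : ((1 : Matrix I I R) ⊗ₖ H *ᵥ s) (i, a) = (H *ᵥ fun b => s (i, b)) a := by
  simp [mulVec, dotProduct, Fintype.sum_prod_type, one_apply, ite_mul]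

theorem kronecker_one_mulVec_apply [DecidableEq B] (A : Matrix J I R) (s : I × B → R) (a : J)
    (b : B) : (A ⊗ₖ (1 : Matrix B B R) *ᵥ s) (a, b) = (A *ᵥ fun i => s (i, b)) a := by
  simp [mulVec, dotProduct, Fintype.sum_prod_type, one_apply]

theorem one_kronecker_mulVec_eq_zero_iff [DecidableEq I] (H : Matrix J B R) (s : I × B → R) :
    (1 : Matrix I I R) ⊗ₖ H *ᵥ s = 0 ↔ ∀ i, H *ᵥ (fun b => s (i, b)) = 0 := by
  simp only [funext_iff, Prod.forall, one_kronecker_mulVec_apply, Pi.zero_apply]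

end Kronecker

def sumCurryEquiv (R I1 I2 B : Type*) [Semiring R] :
    ((I1 × B → R) × (I2 × B → R)) ≃ₗ[R] (I1 ⊕ I2 → B → R) :=
  (LinearEquiv.prodCongr (LinearEquiv.curry R R I1 B) (LinearEquiv.curry R R I2 B)).trans
    (LinearEquiv.sumArrowLequivProdArrow I1 I2 R (B → R)).symm

@[simp]
theorem sumCurryEquiv_apply_inl {R I1 I2 B : Type*} [Semiring R] (s : I1 × B → R)
    (v : I2 × B → R) (i : I1) : sumCurryEquiv R I1 I2 B (s, v) (Sum.inl i) = fun b => s (i, b) :=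
  rfl

@[simp]
theorem sumCurryEquiv_apply_inr {R I1 I2 B : Type*} [Semiring R] (s : I1 × B → R)
    (v : I2 × B → R) (j : I2) : sumCurryEquiv R I1 I2 B (s, v) (Sum.inr j) = fun b => v (j, b) :=
  rfl

theorem sumCurryEquiv_mem_arrayTensor_iff {R I1 I2 J L1 L2 B : Type*} [CommSemiring R]
    [Fintype I1] [Fintype I2] [Fintype B] [DecidableEq I1] [DecidableEq I2] [DecidableEq B]
    (A1 : Matrix J I1 R) (A2 : Matrix J I2 R) (C1 : Matrix L1 B R) (C2 : Matrix L2 B R)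
    (s : I1 × B → R) (v : I2 × B → R) :
    sumCurryEquiv R I1 I2 B (s, v) ∈
        arrayTensor (LinearMap.ker (fromCols A1 A2).mulVecLin)
          (LinearMap.ker (fromRows C1 C2).mulVecLin) ↔
      (((1 : Matrix I1 I1 R) ⊗ₖ C1 *ᵥ s = 0 ∧ (1 : Matrix I1 I1 R) ⊗ₖ C2 *ᵥ s = 0) ∧
        (1 : Matrix I2 I2 R) ⊗ₖ C1 *ᵥ v = 0 ∧ (1 : Matrix I2 I2 R) ⊗ₖ C2 *ᵥ v = 0) ∧
        A1 ⊗ₖ (1 : Matrix B B R) *ᵥ s + A2 ⊗ₖ (1 : Matrix B B R) *ᵥ v = 0 := by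
  have hcol (b : B) : (fun k => sumCurryEquiv R I1 I2 B (s, v) k b) =
      Sum.elim (fun i => s (i, b)) (fun j => v (j, b)) := by
    ext (i | j) <;> rfl
  have hrows (x : B → R) : fromRows C1 C2 *ᵥ x = 0 ↔ C1 *ᵥ x = 0 ∧ C2 *ᵥ x = 0 := by
    rw [fromRows_mulVec, ← Sum.elim_zero_zero, Sum.elim_eq_iff]
  have hcols : A1 ⊗ₖ (1 : Matrix B B R) *ᵥ s + A2 ⊗ₖ (1 : Matrix B B R) *ᵥ v = 0 ↔
      ∀ b, (A1 *ᵥ fun i => s (i, b)) + (A2 *ᵥ fun j => v (j, b)) = 0 := by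
    simp only [funext_iff, Prod.forall, Pi.add_apply, kronecker_one_mulVec_apply, Pi.zero_apply]
    exact forall_comm
  rw [mem_arrayTensor, and_comm, hcols]
  simp only [LinearMap.mem_ker, mulVecLin_apply, hcol, fromCols_mulVec_sumElim, Sum.forall,
    hrows, forall_and, one_kronecker_mulVec_eq_zero_iff, sumCurryEquiv_apply_inl,
    sumCurryEquiv_apply_inr]
  rw [and_and_and_comm]

theorem hcat_eq_fromCols {I J1 J2 : Type*} (A : Matrix I J1 F2) (B : Matrix I J2 F2) :
    hcat A B = fromCols A B :=
  rfl

theorem vcat_eq_fromRows {I1 I2 J : Type*} (A : Matrix I1 J F2) (B : Matrix I2 J F2) :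
    vcat A B = fromRows A B :=
  rfl

/-- The `S`/`V` dependency system of the 4D XYZ product (Eq. (19) of the paper):
the space of pairs `(s, v)` with
`(I_{m1}⊗H_{x2}) s = (I_{m1}⊗H_{z2}) s = 0`,
`(I_{m2}⊗H_{x2}) v = (I_{m2}⊗H_{z2}) v = 0`, and
`(H_{x1}ᵀ⊗I_{nB}) s + (H_{z1}ᵀ⊗I_{nB}) v = 0`
has dimension `dim ker([H_{x1}ᵀ, H_{z1}ᵀ]) · dim ker(vertcat(H_{x2}, H_{z2}))`,
i.e. it is (isomorphic to) the tensor product of the two kernels. -/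
theorem sv_solution_space_dim {m1 m2 m3 m4 nA nB : ℕ}
    (Hx1 : Matrix (Fin m1) (Fin nA) F2) (Hz1 : Matrix (Fin m2) (Fin nA) F2)
    (Hx2 : Matrix (Fin m3) (Fin nB) F2) (Hz2 : Matrix (Fin m4) (Fin nB) F2) :
    Module.finrank F2 (LinearMap.ker
      (LinearMap.prod
        (LinearMap.prod
          (LinearMap.prod
            ((((1 : Matrix (Fin m1) (Fin m1) F2) ⊗ₖ Hx2).mulVecLin).comp
              (LinearMap.fst F2 (Fin m1 × Fin nB → F2) (Fin m2 × Fin nB → F2)))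
            ((((1 : Matrix (Fin m1) (Fin m1) F2) ⊗ₖ Hz2).mulVecLin).comp
              (LinearMap.fst F2 (Fin m1 × Fin nB → F2) (Fin m2 × Fin nB → F2))))
          (LinearMap.prod
            ((((1 : Matrix (Fin m2) (Fin m2) F2) ⊗ₖ Hx2).mulVecLin).comp
              (LinearMap.snd F2 (Fin m1 × Fin nB → F2) (Fin m2 × Fin nB → F2)))
            ((((1 : Matrix (Fin m2) (Fin m2) F2) ⊗ₖ Hz2).mulVecLin).comp
              (LinearMap.snd F2 (Fin m1 × Fin nB → F2) (Fin m2 × Fin nB → F2)))))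
        (((Hx1ᵀ ⊗ₖ (1 : Matrix (Fin nB) (Fin nB) F2)).mulVecLin).comp
            (LinearMap.fst F2 (Fin m1 × Fin nB → F2) (Fin m2 × Fin nB → F2)) +
         ((Hz1ᵀ ⊗ₖ (1 : Matrix (Fin nB) (Fin nB) F2)).mulVecLin).comp
            (LinearMap.snd F2 (Fin m1 × Fin nB → F2) (Fin m2 × Fin nB → F2))))) =
    Module.finrank F2 (LinearMap.ker (hcat Hx1ᵀ Hz1ᵀ).mulVecLin) *
    Module.finrank F2 (LinearMap.ker (vcat Hx2 Hz2).mulVecLin) := by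
  set e := sumCurryEquiv F2 (Fin m1) (Fin m2) (Fin nB)
  rw [hcat_eq_fromCols, vcat_eq_fromRows, ← finrank_arrayTensor,
    ← e.symm.finrank_map_eq (arrayTensor _ _), ← Submodule.comap_equiv_eq_map_symm]
  refine congrArg (fun p : Submodule F2 _ => finrank F2 p) ?_
  ext ⟨s, v⟩
  simp only [Submodule.mem_comap, LinearMap.mem_ker, LinearMap.prod_apply, Function.prod,
    Prod.mk_eq_zero, LinearMap.comp_apply, LinearMap.add_apply, LinearMap.fst_apply,
    LinearMap.snd_apply, mulVecLin_apply]
  exact (sumCurryEquiv_mem_arrayTensor_iff _ _ _ _ s v).symm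
end

section
/- The 4D XYZ product of two concatenated codes built from pairs of repetition codes of odd block lengths (n1,n2) and (n3,n4) has code dimension exactly 1. -/
open Matrix Kronecker

section
variable {A1 B1 A2 B2 Q1 Q2 : Type*}
  [Fintype A1] [Fintype B1] [Fintype A2] [Fintype B2] [Fintype Q1] [Fintype Q2]
  [DecidableEq A1] [DecidableEq B1] [DecidableEq A2] [DecidableEq B2]
  [DecidableEq Q1] [DecidableEq Q2]

-- helpers to collapse kronecker-with-identity sums
lemma xyzAux_kron_left {α β : Type*} [Fintype α] [Fintype β] [DecidableEq α]
    (f : α × β → F2) (g : β → F2) (a : α) :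
    ∑ p : α × β, f p * ((if p.1 = a then (1:F2) else 0) * g p.2) = ∑ b, f (a, b) * g b := by
  rw [Fintype.sum_prod_type]
  rw [Finset.sum_eq_single a (fun b _ hb => Finset.sum_eq_zero fun r2 _ => by simp [hb])
    (by simp)]
  simp

lemma xyzAux_kron_right {α β : Type*} [Fintype α] [Fintype β] [DecidableEq β]
    (f : α × β → F2) (g : α → F2) (b : β) :
    ∑ p : α × β, f p * (g p.1 * (if p.2 = b then (1:F2) else 0)) = ∑ a, f (a, b) * g a := by
  rw [Fintype.sum_prod_type_right]
  rw [Finset.sum_eq_single b (fun c _ hc => Finset.sum_eq_zero fun a _ => by simp [hc])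
    (by simp)]
  simp

lemma xyz_rows_indep
    (Hx1 : Matrix A1 Q1 F2) (Hz1 : Matrix B1 Q1 F2)
    (Hx2 : Matrix A2 Q2 F2) (Hz2 : Matrix B2 Q2 F2)
    (hind1 : ∀ (x : A1 → F2) (y : B1 → F2),
      (∀ q, (∑ a, x a * Hx1 a q) + (∑ b, y b * Hz1 b q) = 0) →
      (∀ a, x a = 0) ∧ (∀ b, y b = 0))
    (hind2 : ∀ (x : A2 → F2) (y : B2 → F2),
      (∀ q, (∑ a, x a * Hx2 a q) + (∑ b, y b * Hz2 b q) = 0) →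
      (∀ a, x a = 0) ∧ (∀ b, y b = 0))
    (v : (A1 × Q2) ⊕ (Q1 × B2) ⊕ (Q1 × A2) ⊕ (B1 × Q2) → F2)
    (hv : v ᵥ* hcat (XYZ4D_Hx Hx1 Hz1 Hx2 Hz2) (XYZ4D_Hz Hx1 Hz1 Hx2 Hz2) = 0) :
    v = 0 := by
  -- X-side equation at column (q1, q2) : E3
  have E3 : ∀ (q1 : Q1) (q2 : Q2),
      (∑ b2, v (.inr (.inl (q1, b2))) * Hz2 b2 q2)
        + (∑ a2, v (.inr (.inr (.inl (q1, a2)))) * Hx2 a2 q2) = 0 := by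
    intro q1 q2
    have h3 := congrFun hv (Sum.inl (.inr (.inr (.inl (q1, q2)))))
    simp only [vecMul, dotProduct, hcat, Sum.elim_inl, Pi.zero_apply,
      Fintype.sum_sum_type, XYZ4D_Hx, kroneckerMap_apply, one_apply,
      mul_zero, Finset.sum_const_zero, zero_add, add_zero] at h3
    rw [xyzAux_kron_left (fun p => v (.inr (.inl p))) (fun b2 => Hz2 b2 q2) q1,
      xyzAux_kron_left (fun p => v (.inr (.inr (.inl p)))) (fun a2 => Hx2 a2 q2) q1] at h3
    exact h3
  -- Z-side equation at column (q1, q2) : F3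
  have F3 : ∀ (q1 : Q1) (q2 : Q2),
      (∑ a1, v (.inl (a1, q2)) * Hx1 a1 q1)
        + (∑ b1, v (.inr (.inr (.inr (b1, q2)))) * Hz1 b1 q1) = 0 := by
    intro q1 q2
    have h3 := congrFun hv (Sum.inr (.inr (.inr (.inl (q1, q2)))))
    simp only [vecMul, dotProduct, hcat, Sum.elim_inr, Pi.zero_apply,
      Fintype.sum_sum_type, XYZ4D_Hz, kroneckerMap_apply, one_apply,
      mul_zero, Finset.sum_const_zero, zero_add, add_zero] at h3
    rw [xyzAux_kron_right (fun p => v (.inl p)) (fun a1 => Hx1 a1 q1) q2,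
      xyzAux_kron_right (fun p => v (.inr (.inr (.inr p)))) (fun b1 => Hz1 b1 q1) q2] at h3
    exact h3
  have hTU : ∀ q1 : Q1,
      (∀ a2, v (.inr (.inr (.inl (q1, a2)))) = 0) ∧ (∀ b2, v (.inr (.inl (q1, b2))) = 0) := by
    intro q1
    exact hind2 (fun a2 => v (.inr (.inr (.inl (q1, a2))))) (fun b2 => v (.inr (.inl (q1, b2))))
      (fun q2 => by rw [add_comm]; exact E3 q1 q2)
  have hSW : ∀ q2 : Q2,
      (∀ a1, v (.inl (a1, q2)) = 0) ∧ (∀ b1, v (.inr (.inr (.inr (b1, q2)))) = 0) := by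
    intro q2
    exact hind1 (fun a1 => v (.inl (a1, q2))) (fun b1 => v (.inr (.inr (.inr (b1, q2)))))
      (fun q1 => F3 q1 q2)
  funext r
  match r with
  | .inl (a1, q2) => exact (hSW q2).1 a1
  | .inr (.inl (q1, b2)) => exact (hTU q1).2 b2
  | .inr (.inr (.inl (q1, a2))) => exact (hTU q1).1 a2
  | .inr (.inr (.inr (b1, q2))) => exact (hSW q2).2 b1
end

lemma xyzAux_sum_ind {n k : ℕ} (hk : k < n) :
    ∑ c : Fin n, (if (c : ℕ) = k then (1 : F2) else 0) = 1 := by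
  have : ∀ c : Fin n, ((c : ℕ) = k) = (c = ⟨k, hk⟩) := by
    intro c; simp [Fin.ext_iff]
  simp only [this]; simp

lemma xyzAux_ind_or {P Q : Prop} [Decidable P] [Decidable Q] (h : ¬(P ∧ Q)) :
    (if P ∨ Q then (1 : F2) else 0) = (if P then 1 else 0) + (if Q then 1 else 0) := by
  by_cases hP : P <;> by_cases hQ : Q <;> simp_all

lemma xyzAux_collapse {m : ℕ} (x : Fin m → F2) (k : ℕ) :
    ∑ i : Fin m, x i * (if k = (i : ℕ) then 1 else 0)
      = if h : k < m then x ⟨k, h⟩ else 0 := by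
  split
  · next h =>
    rw [Finset.sum_eq_single ⟨k, h⟩]
    · simp
    · intro b _ hb; simp [Fin.ext_iff] at hb ⊢; intro hbk; exact absurd hbk.symm hb
    · simp
  · next h =>
    apply Finset.sum_eq_zero
    intro i _
    have : k ≠ (i : ℕ) := by omega
    simp [this]

lemma xyzAux_collapse' {m : ℕ} (x : Fin m → F2) (k : ℕ) :
    ∑ i : Fin m, x i * (if k = (i : ℕ) + 1 then 1 else 0)
      = if h : k - 1 < m ∧ 1 ≤ k then x ⟨k - 1, h.1⟩ else 0 := by
  have : ∀ i : Fin m, (k = (i : ℕ) + 1) = (k - 1 = (i : ℕ) ∧ 1 ≤ k) := by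
    intro i; simp only [eq_iff_iff]; omega
  simp only [this]
  by_cases hk : 1 ≤ k
  · simp only [hk, and_true]
    rw [xyzAux_collapse]
  · simp [hk]

/-- The repetition-code row-pattern: summing the indicator column over all c gives 0 (each row has two ones). -/
lemma xyzAux_rep_sum {n m : ℕ} (hm : m + 1 ≤ n) (x : Fin m → F2) :
    ∑ c : Fin n, ∑ i : Fin m, x i * (if (c : ℕ) = (i : ℕ) ∨ (c : ℕ) = (i : ℕ) + 1 then (1:F2) else 0) = 0 := by
  rw [Finset.sum_comm]
  apply Finset.sum_eq_zero
  intro i _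
  have hne : ∀ c : Fin n, ¬((c : ℕ) = (i : ℕ) ∧ (c : ℕ) = (i : ℕ) + 1) := by intro c; omega
  calc ∑ c : Fin n, x i * (if (c : ℕ) = (i : ℕ) ∨ (c : ℕ) = (i : ℕ) + 1 then (1:F2) else 0)
      = x i * ∑ c : Fin n, ((if (c : ℕ) = (i : ℕ) then (1:F2) else 0) + (if (c : ℕ) = (i : ℕ) + 1 then 1 else 0)) := by
        rw [Finset.mul_sum]; exact Finset.sum_congr rfl fun c _ => by rw [xyzAux_ind_or (hne c)]
    _ = 0 := by
        rw [Finset.sum_add_distrib, xyzAux_sum_ind (by omega), xyzAux_sum_ind (by omega)]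
        simp [CharTwo.add_self_eq_zero]

/-- Full row rank of the repetition-code pattern. -/
lemma xyzAux_rep_indep {n m : ℕ} (hm : m < n) (x : Fin m → F2)
    (h : ∀ c : Fin n, ∑ i : Fin m, x i * (if (c : ℕ) = (i : ℕ) ∨ (c : ℕ) = (i : ℕ) + 1 then (1:F2) else 0) = 0) :
    ∀ i, x i = 0 := by
  have key : ∀ k : ℕ, ∀ hk : k < m, x ⟨k, hk⟩ = 0 := by
    intro k
    induction k using Nat.strong_induction_on with
    | _ k ih =>
      intro hk
      have hc := h ⟨k, by omega⟩
      have hsplit : ∀ i : Fin m, (if (k : ℕ) = (i : ℕ) ∨ (k : ℕ) = (i : ℕ) + 1 then (1:F2) else 0)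
          = (if k = (i : ℕ) then 1 else 0) + (if k = (i : ℕ) + 1 then 1 else 0) := by
        intro i; exact xyzAux_ind_or (by omega)
      simp only [hsplit, mul_add, Finset.sum_add_distrib, xyzAux_collapse, xyzAux_collapse'] at hc
      rw [dif_pos hk] at hc
      by_cases h1 : 1 ≤ k
      · rw [dif_pos ⟨by omega, h1⟩] at hc
        rw [ih (k-1) (by omega) (by omega)] at hc
        simpa using hc
      · rw [dif_neg (by omega)] at hc
        simpa using hc
  intro i
  have := key i.1 i.2
  simpa using this

lemma xyzAux_prod_collapse {α : Type*} [Fintype α] [DecidableEq α] {m : ℕ}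
    (y : α × Fin m → F2) (c : α) (P : Fin m → Prop) [DecidablePred P] :
    ∑ r : α × Fin m, y r * (if c = r.1 ∧ P r.2 then (1:F2) else 0)
      = ∑ r2 : Fin m, y (c, r2) * (if P r2 then 1 else 0) := by
  rw [Fintype.sum_prod_type]
  rw [Finset.sum_eq_single c (fun b _ hb => Finset.sum_eq_zero fun r2 _ => by
    simp [Ne.symm hb]) (by simp)]
  simp

/-- odd n • over F2 -/
lemma xyzAux_odd_smul {n : ℕ} (hn : Odd n) (x : F2) : (n : F2) * x = x := by
  obtain ⟨m, hm⟩ := hn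
  subst hm
  push_cast
  ring_nf
  simp [CharTwo.two_eq_zero]


lemma xyzAux_rank {R N : Type*} [Fintype R] [Fintype N] (M : Matrix R N F2)
    (h : ∀ v, Matrix.vecMul v M = 0 → v = 0) : M.rank = Fintype.card R := by
  rw [← Matrix.rank_transpose]
  have hinj : Function.Injective Mᵀ.mulVecLin := by
    apply (injective_iff_map_eq_zero _).mpr
    intro v hv
    exact h v (by rwa [Matrix.mulVecLin_apply, Matrix.mulVec_transpose] at hv)
  rw [Matrix.rank, LinearMap.finrank_range_of_inj hinj,
    Module.finrank_fintype_fun_eq_card]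

/-- X-type parity-check matrix of the concatenation of two repetition codes
(outer length `n1`, inner length `n2`). -/
def concatHx (n1 n2 : ℕ) : Matrix (Fin (n1 - 1)) (Fin n1 × Fin n2) F2 :=
  fun i c => if (c.1 : ℕ) = (i : ℕ) ∨ (c.1 : ℕ) = (i : ℕ) + 1 then 1 else 0

/-- Z-type parity-check matrix of the concatenated code: block diagonal with
`n1` copies of the `(n2−1)×n2` repetition-code parity-check matrix. -/
def concatHz (n1 n2 : ℕ) : Matrix (Fin n1 × Fin (n2 - 1)) (Fin n1 × Fin n2) F2 :=
  fun r c => if c.1 = r.1 ∧ ((c.2 : ℕ) = (r.2 : ℕ) ∨ (c.2 : ℕ) = (r.2 : ℕ) + 1) then 1 else 0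

lemma concat_indep {n1 n2 : ℕ} (h1 : Odd n1) (h2 : Odd n2)
    (x : Fin (n1 - 1) → F2) (y : Fin n1 × Fin (n2 - 1) → F2)
    (h : ∀ q : Fin n1 × Fin n2,
      (∑ i, x i * concatHx n1 n2 i q) + (∑ r, y r * concatHz n1 n2 r q) = 0) :
    (∀ i, x i = 0) ∧ (∀ r, y r = 0) := by
  have hn1 : 1 ≤ n1 := h1.pos
  have hn2 : 1 ≤ n2 := h2.pos
  -- rewrite h using collapse on first coordinate
  have h' : ∀ (c1 : Fin n1) (c2 : Fin n2),
      (∑ i, x i * (if (c1 : ℕ) = (i : ℕ) ∨ (c1 : ℕ) = (i : ℕ) + 1 then (1:F2) else 0))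
        + (∑ r2 : Fin (n2-1), y (c1, r2) *
            (if (c2 : ℕ) = (r2 : ℕ) ∨ (c2 : ℕ) = (r2 : ℕ) + 1 then 1 else 0)) = 0 := by
    intro c1 c2
    have := h (c1, c2)
    simp only [concatHx, concatHz] at this
    rwa [xyzAux_prod_collapse y c1 (fun r2 => (c2 : ℕ) = (r2 : ℕ) ∨ (c2 : ℕ) = (r2 : ℕ) + 1)] at this
  -- the x-part is 0 for every c1, by summing over c2
  have hX : ∀ c1 : Fin n1,
      (∑ i, x i * (if (c1 : ℕ) = (i : ℕ) ∨ (c1 : ℕ) = (i : ℕ) + 1 then (1:F2) else 0)) = 0 := by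
    intro c1
    have hsum := Finset.sum_congr rfl (fun c2 (_ : c2 ∈ Finset.univ) => h' c1 c2)
    rw [Finset.sum_add_distrib, Finset.sum_const, Finset.sum_eq_zero (fun _ _ => rfl)] at hsum
    rw [xyzAux_rep_sum (by omega) (fun r2 => y (c1, r2))] at hsum
    rw [add_zero, Finset.card_univ, Fintype.card_fin, nsmul_eq_mul] at hsum
    rwa [xyzAux_odd_smul h2] at hsum
  -- hence the y-part is 0
  have hY : ∀ (c1 : Fin n1) (c2 : Fin n2),
      (∑ r2 : Fin (n2-1), y (c1, r2) *
        (if (c2 : ℕ) = (r2 : ℕ) ∨ (c2 : ℕ) = (r2 : ℕ) + 1 then (1:F2) else 0)) = 0 := by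
    intro c1 c2
    have := h' c1 c2
    rw [hX c1, zero_add] at this
    exact this
  constructor
  · exact xyzAux_rep_indep (by omega) x hX
  · intro r
    have := xyzAux_rep_indep (n := n2) (by omega) (fun r2 => y (r.1, r2)) (hY r.1) r.2
    simpa using this

/-- Corollary 2 of the paper: the 4D XYZ product of two concatenated codes built
from pairs of repetition codes of odd block lengths `(n1, n2)` and `(n3, n4)`
has code dimension (number of qubits minus the rank of the symplectic check
matrix `(H_x | H_z)`) exactly 1. -/
theorem xyz4D_concatenated_code_dimension (n1 n2 n3 n4 : ℕ)
    (h1 : Odd n1) (h2 : Odd n2) (h3 : Odd n3) (h4 : Odd n4) :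
    Fintype.card ((Fin (n1 - 1) × (Fin n3 × Fin (n4 - 1))) ⊕
        (Fin (n1 - 1) × Fin (n3 - 1)) ⊕
        ((Fin n1 × Fin n2) × (Fin n3 × Fin n4)) ⊕
        ((Fin n1 × Fin (n2 - 1)) × (Fin n3 × Fin (n4 - 1))) ⊕
        ((Fin n1 × Fin (n2 - 1)) × Fin (n3 - 1))) -
      (hcat (XYZ4D_Hx (concatHx n1 n2) (concatHz n1 n2) (concatHx n3 n4) (concatHz n3 n4))
            (XYZ4D_Hz (concatHx n1 n2) (concatHz n1 n2) (concatHx n3 n4) (concatHz n3 n4))).rank =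
    1 := by
  have key := xyzAux_rank _ (xyz_rows_indep (concatHx n1 n2) (concatHz n1 n2)
      (concatHx n3 n4) (concatHz n3 n4)
      (fun x y hxy => concat_indep h1 h2 x y hxy)
      (fun x y hxy => concat_indep h3 h4 x y hxy))
  rw [key]
  obtain ⟨k1, hk1⟩ := h1; obtain ⟨k2, hk2⟩ := h2
  obtain ⟨k3, hk3⟩ := h3; obtain ⟨k4, hk4⟩ := h4
  subst hk1 hk2 hk3 hk4
  simp only [Fintype.card_sum, Fintype.card_prod, Fintype.card_fin, Nat.add_sub_cancel]
  have haux : ∀ a b : ℕ, a = b + 1 → a - b = 1 := fun a b hab => by omega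
  apply haux
  ring
end

section
/- Let H_{x1}, H_{z1}, H_{x2}, H_{z2} be CSS parity-check matrices as in the 4D XYZ product. Suppose r ∈ ker(vertcat(H_{x1},H_{z1})) ⊗ Im([H_{x2}ᵀ, H_{z2}ᵀ]) ⊆ F_2^{nA·nB}. Then there exist t ∈ ker(vertcat(H_{x1},H_{z1})) ⊗ F_2^{m4} and u ∈ ker(vertcat(H_{x1},H_{z1})) ⊗ F_2^{m3} such that r = (I_{nA}⊗H_{x2}ᵀ)t + (I_{nA}⊗H_{z2}ᵀ)u, and moreover (H_{z1}⊗I_{m4})t = (H_{x1}⊗I_{m4})t = 0 and (H_{z1}⊗I_{m3})u = (H_{x1}⊗I_{m3})u = 0. -/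
open Matrix Kronecker

/-- Kronecker (tensor) product of two vectors over `F_2`. -/
def kronV {I J : Type*} (x : I → F2) (y : J → F2) : I × J → F2 :=
  fun p => x p.1 * y p.2

/-!
The vectors `(I ⊗ H_{z2}ᵀ) t + (I ⊗ H_{x2}ᵀ) u` with `t`, `u` in `(ker H_{x1} ∩ ker H_{z1}) ⊗ F_2^m`
form a subspace, being the image of a linear map on a subspace, so it suffices to treat a pure
tensor `x ⊗ [H_{x2}ᵀ H_{z2}ᵀ] z`. Splitting `z = (z₃, z₄)` gives `t = x ⊗ z₄` and `u = x ⊗ z₃`.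
-/

section

variable {ι κ μ ν : Type*}

lemma kronV_zero_left (y : κ → F2) : kronV (0 : ι → F2) y = 0 := by
  ext p
  exact zero_mul (y p.2)

lemma kronV_add_right (x : ι → F2) (y y' : κ → F2) :
    kronV x (y + y') = kronV x y + kronV x y' := by
  ext p
  exact mul_add (x p.1) (y p.2) (y' p.2)

lemma kronecker_mulVec_kronV [Fintype κ] [Fintype ν] (A : Matrix ι κ F2) (B : Matrix μ ν F2)
    (x : κ → F2) (y : ν → F2) : (A ⊗ₖ B) *ᵥ kronV x y = kronV (A *ᵥ x) (B *ᵥ y) := by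
  ext ⟨i, j⟩
  simp only [mulVec, dotProduct, kronV, kroneckerMap_apply, Fintype.sum_prod_type,
    Finset.sum_mul_sum]
  exact Finset.sum_congr rfl fun k _ => Finset.sum_congr rfl fun l _ => by ring

lemma kronecker_one_mulVec_kronV_of_mulVec_eq_zero [Fintype κ] [Fintype μ] [DecidableEq μ]
    {A : Matrix ι κ F2} {x : κ → F2} (hx : A *ᵥ x = 0) (y : μ → F2) :
    (A ⊗ₖ (1 : Matrix μ μ F2)) *ᵥ kronV x y = 0 := by
  rw [kronecker_mulVec_kronV, hx, kronV_zero_left]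

lemma vcat_mulVec_eq_zero_iff [Fintype ι] (A : Matrix κ ι F2) (B : Matrix μ ι F2) (x : ι → F2) :
    vcat A B *ᵥ x = 0 ↔ A *ᵥ x = 0 ∧ B *ᵥ x = 0 := by
  rw [← Sum.elim_zero_zero, ← Sum.elim_eq_iff]
  exact Iff.of_eq (congrArg (· = _) (fromRows_mulVec A B x))

lemma hcat_mulVec [Fintype κ] [Fintype μ] (A : Matrix ι κ F2) (B : Matrix ι μ F2)
    (z : κ ⊕ μ → F2) : hcat A B *ᵥ z = A *ᵥ (z ∘ Sum.inl) + B *ᵥ (z ∘ Sum.inr) :=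
  fromCols_mulVec A B z

end

section

variable {ι κ m1 m2 m3 m4 : Type*} [Fintype ι] [DecidableEq ι]
  [Fintype m3] [DecidableEq m3] [Fintype m4] [DecidableEq m4]
  (Hx1 : Matrix m1 ι F2) (Hz1 : Matrix m2 ι F2) (Hx2 : Matrix m3 κ F2) (Hz2 : Matrix m4 κ F2)

/-- The X-type operators on the middle block generated by the `T`- and `U`-type stabilizers. -/
def tuStabilizers : Submodule F2 (ι × κ → F2) :=
  Submodule.map ((1 ⊗ₖ Hz2ᵀ : Matrix (ι × κ) (ι × m4) F2).mulVecLin.coprod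
      (1 ⊗ₖ Hx2ᵀ : Matrix (ι × κ) (ι × m3) F2).mulVecLin)
    ((LinearMap.ker (Hx1 ⊗ₖ (1 : Matrix m4 m4 F2)).mulVecLin ⊓
        LinearMap.ker (Hz1 ⊗ₖ (1 : Matrix m4 m4 F2)).mulVecLin).prod
      (LinearMap.ker (Hx1 ⊗ₖ (1 : Matrix m3 m3 F2)).mulVecLin ⊓
        LinearMap.ker (Hz1 ⊗ₖ (1 : Matrix m3 m3 F2)).mulVecLin))

lemma mem_tuStabilizers_iff (r : ι × κ → F2) :
    r ∈ tuStabilizers Hx1 Hz1 Hx2 Hz2 ↔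
      ∃ (t : ι × m4 → F2) (u : ι × m3 → F2),
        r = ((1 : Matrix ι ι F2) ⊗ₖ Hz2ᵀ) *ᵥ t + ((1 : Matrix ι ι F2) ⊗ₖ Hx2ᵀ) *ᵥ u ∧
        (Hx1 ⊗ₖ (1 : Matrix m4 m4 F2)) *ᵥ t = 0 ∧ (Hz1 ⊗ₖ (1 : Matrix m4 m4 F2)) *ᵥ t = 0 ∧
        (Hx1 ⊗ₖ (1 : Matrix m3 m3 F2)) *ᵥ u = 0 ∧ (Hz1 ⊗ₖ (1 : Matrix m3 m3 F2)) *ᵥ u = 0 := by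
  simp only [tuStabilizers, Submodule.mem_map, Submodule.mem_prod, Submodule.mem_inf,
    LinearMap.mem_ker, mulVecLin_apply, LinearMap.coprod_apply, Prod.exists]
  constructor
  · rintro ⟨t, u, ⟨⟨ht₁, ht₂⟩, hu₁, hu₂⟩, rfl⟩
    exact ⟨t, u, rfl, ht₁, ht₂, hu₁, hu₂⟩
  · rintro ⟨t, u, rfl, ht₁, ht₂, hu₁, hu₂⟩
    exact ⟨t, u, ⟨⟨ht₁, ht₂⟩, hu₁, hu₂⟩, rfl⟩

variable {Hx1 Hz1} in
lemma kronV_mem_tuStabilizers [Fintype κ] {x : ι → F2} (hx₁ : Hx1 *ᵥ x = 0) (hx₂ : Hz1 *ᵥ x = 0)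
    (z : m3 ⊕ m4 → F2) : kronV x (hcat Hx2ᵀ Hz2ᵀ *ᵥ z) ∈ tuStabilizers Hx1 Hz1 Hx2 Hz2 := by
  refine (mem_tuStabilizers_iff Hx1 Hz1 Hx2 Hz2 _).mpr
    ⟨kronV x (z ∘ Sum.inr), kronV x (z ∘ Sum.inl), ?_,
      kronecker_one_mulVec_kronV_of_mulVec_eq_zero hx₁ _,
      kronecker_one_mulVec_kronV_of_mulVec_eq_zero hx₂ _,
      kronecker_one_mulVec_kronV_of_mulVec_eq_zero hx₁ _,
      kronecker_one_mulVec_kronV_of_mulVec_eq_zero hx₂ _⟩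
  rw [kronecker_mulVec_kronV, kronecker_mulVec_kronV, one_mulVec, ← kronV_add_right, hcat_mulVec,
    add_comm]

end

theorem ker_tensor_im_is_stabilizer_general {m1 m2 m3 m4 nA nB : ℕ}
    (Hx1 : Matrix (Fin m1) (Fin nA) F2) (Hz1 : Matrix (Fin m2) (Fin nA) F2)
    (Hx2 : Matrix (Fin m3) (Fin nB) F2) (Hz2 : Matrix (Fin m4) (Fin nB) F2)
    (r : Fin nA × Fin nB → F2)
    (hr : r ∈ Submodule.span F2
      {w : Fin nA × Fin nB → F2 | ∃ x ∈ LinearMap.ker ((vcat Hx1 Hz1).mulVecLin),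
        ∃ y ∈ LinearMap.range ((hcat Hx2ᵀ Hz2ᵀ).mulVecLin), w = kronV x y}) :
    ∃ (t : Fin nA × Fin m4 → F2) (u : Fin nA × Fin m3 → F2),
      r = ((1 : Matrix (Fin nA) (Fin nA) F2) ⊗ₖ Hz2ᵀ).mulVec t +
          ((1 : Matrix (Fin nA) (Fin nA) F2) ⊗ₖ Hx2ᵀ).mulVec u ∧
      (Hx1 ⊗ₖ (1 : Matrix (Fin m4) (Fin m4) F2)).mulVec t = 0 ∧
      (Hz1 ⊗ₖ (1 : Matrix (Fin m4) (Fin m4) F2)).mulVec t = 0 ∧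
      (Hx1 ⊗ₖ (1 : Matrix (Fin m3) (Fin m3) F2)).mulVec u = 0 ∧
      (Hz1 ⊗ₖ (1 : Matrix (Fin m3) (Fin m3) F2)).mulVec u = 0 := by
  rw [← mem_tuStabilizers_iff]
  refine Submodule.span_le.mpr ?_ hr
  rintro _ ⟨x, hx, _, ⟨z, rfl⟩, rfl⟩
  rw [LinearMap.mem_ker, mulVecLin_apply, vcat_mulVec_eq_zero_iff] at hx
  exact kronV_mem_tuStabilizers Hx2 Hz2 hx.1 hx.2 z

/-- Lemma from the proof of Theorem 2: if
`r ∈ ker(vertcat(H_{x1},H_{z1})) ⊗ Im([H_{x2}ᵀ, H_{z2}ᵀ]) ⊆ F_2^{nA·nB}`, then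
there are `t ∈ ker(vertcat(H_{x1},H_{z1})) ⊗ F_2^{m4}` and
`u ∈ ker(vertcat(H_{x1},H_{z1})) ⊗ F_2^{m3}` with
`r = (I_{nA}⊗H_{z2}ᵀ)t + (I_{nA}⊗H_{x2}ᵀ)u`; i.e. such an X-type operator on
the middle qubit block is a product of `T`- and `U`-type stabilizer
generators. -/
theorem ker_tensor_im_is_stabilizer {m1 m2 m3 m4 nA nB : ℕ}
    (Hx1 : Matrix (Fin m1) (Fin nA) F2) (Hz1 : Matrix (Fin m2) (Fin nA) F2)
    (Hx2 : Matrix (Fin m3) (Fin nB) F2) (Hz2 : Matrix (Fin m4) (Fin nB) F2)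
    (hcss1 : Hx1 * Hz1ᵀ = 0) (hcss2 : Hx2 * Hz2ᵀ = 0)
    (r : Fin nA × Fin nB → F2)
    (hr : r ∈ Submodule.span F2
      {w : Fin nA × Fin nB → F2 | ∃ x ∈ LinearMap.ker ((vcat Hx1 Hz1).mulVecLin),
        ∃ y ∈ LinearMap.range ((hcat Hx2ᵀ Hz2ᵀ).mulVecLin), w = kronV x y}) :
    ∃ (t : Fin nA × Fin m4 → F2) (u : Fin nA × Fin m3 → F2),
      r = ((1 : Matrix (Fin nA) (Fin nA) F2) ⊗ₖ Hz2ᵀ).mulVec t +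
          ((1 : Matrix (Fin nA) (Fin nA) F2) ⊗ₖ Hx2ᵀ).mulVec u ∧
      (Hx1 ⊗ₖ (1 : Matrix (Fin m4) (Fin m4) F2)).mulVec t = 0 ∧
      (Hz1 ⊗ₖ (1 : Matrix (Fin m4) (Fin m4) F2)).mulVec t = 0 ∧
      (Hx1 ⊗ₖ (1 : Matrix (Fin m3) (Fin m3) F2)).mulVec u = 0 ∧
      (Hz1 ⊗ₖ (1 : Matrix (Fin m3) (Fin m3) F2)).mulVec u = 0 :=
  ker_tensor_im_is_stabilizer_general Hx1 Hz1 Hx2 Hz2 r hr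
end
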